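/- arXiv:1705.02994 — 2 statements merged into one kernel-verified Lean document; each statement's English description precedes it below -/
import Mathlib

section
/- Let R ⊆ ℝ^d be a compact convex set (a polytope, the convex hull of finitely many points) and C ⊆ ℝ^d a convex cone. Define γ_C = max_{‖u‖₂=1} min_{v∈C, ‖v‖₂=1} ⟨u,v⟩. Then min_{x∈R} ‖x‖₂ + (1+γ_C)·max_{x ∈ ext(R)} ‖x − Π_C(x)‖₂ ≥ γ_C · min_{x ∈ ext(R)} ‖x‖₂, where ext(R) is the set of extreme points of R and Π_C(x) is the Euclidean projection of x onto C. -/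
open Metric Set

/-! Fix a unit vector `u` with `a = min_{v ∈ C, ‖v‖ = 1} ⟨u, v⟩ ≥ 0`. Since `C` is a cone,
`⟨u, c⟩ ≥ a ‖c‖` for every `c ∈ C`. If `x` is an extreme point of `R` and `c` its nearest point
in `C`, then `‖x - c‖ ≤ D := max_{ext R} dist(·, C)` gives
`⟨u, x⟩ ≥ a ‖c‖ - D ≥ a (‖x‖ - D) - D ≥ a (m - D) - D` with `m := min_{ext R} ‖·‖`.
This half-space bound passes to `R = conv (ext R)`, so `‖y‖ ≥ ⟨u, y⟩ ≥ a (m - D) - D` on `R`.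
Taking the supremum over `u` gives `min_R ‖·‖ ≥ γ (m - D) - D` when `m > D`; when `m ≤ D` the
inequality only needs `γ ≥ -1`. -/

lemma Real.le_sSup_of_forall_le {s : Set ℝ} {a : ℝ} (hs : ∀ x ∈ s, a ≤ x) (ha : a ≤ 0) :
    a ≤ sSup s := by
  rcases s.eq_empty_or_nonempty with rfl | ⟨x, hx⟩
  · simpa using ha
  by_cases hbdd : BddAbove s
  · exact (hs x hx).trans (le_csSup hbdd hx)
  · rwa [Real.sSup_of_not_bddAbove hbdd]

lemma Real.sSup_mul_le_add {A : Set ℝ} {m n D : ℝ} (hA : ∀ a ∈ A, -1 ≤ a) (hm : 0 ≤ m)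
    (hn : 0 ≤ n) (hD : 0 ≤ D) (h : ∀ a ∈ A, 0 < a → a * (m - D) - D ≤ n) :
    sSup A * m ≤ n + (1 + sSup A) * D := by
  have hA1 : -1 ≤ sSup A := Real.le_sSup_of_forall_le hA (by norm_num)
  rcases le_or_gt m D with hmD | hmD
  · nlinarith
  have hsub : 0 < m - D := sub_pos.2 hmD
  have hbound : sSup A ≤ (n + D) / (m - D) := by
    refine Real.sSup_le (fun a ha => ?_) (by positivity)
    rw [le_div_iff₀ hsub]
    rcases le_or_gt a 0 with ha0 | ha0
    · nlinarith
    · linarith [h a ha ha0]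
  rw [le_div_iff₀ hsub] at hbound
  linarith

lemma Set.Finite.convexHull_extremePoints_convexHull {F : Type*} [NormedAddCommGroup F]
    [NormedSpace ℝ F] {S : Set F} (hS : S.Finite) :
    convexHull ℝ ((convexHull ℝ S).extremePoints ℝ) = convexHull ℝ S := by
  have hfin : ((convexHull ℝ S).extremePoints ℝ).Finite :=
    hS.subset extremePoints_convexHull_subset
  rw [← (hfin.isCompact_convexHull ℝ).isClosed.closure_eq]
  exact closure_convexHull_extremePoints (hS.isCompact_convexHull ℝ) (convex_convexHull ℝ S)

section InnerProductSpace

variable {F : Type*} [NormedAddCommGroup F] [InnerProductSpace ℝ F]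

open scoped RealInnerProductSpace

lemma neg_norm_le_of_mem_inner_unit {C : Set F} {u : F} {b : ℝ}
    (hb : b ∈ {b : ℝ | ∃ v ∈ C, ‖v‖ = 1 ∧ b = ⟪u, v⟫}) : -‖u‖ ≤ b := by
  obtain ⟨v, -, hv, rfl⟩ := hb
  simpa [hv] using neg_le_of_abs_le (abs_real_inner_le_norm u v)

lemma bddBelow_inner_unit (C : Set F) (u : F) :
    BddBelow {b : ℝ | ∃ v ∈ C, ‖v‖ = 1 ∧ b = ⟪u, v⟫} :=
  ⟨-‖u‖, fun _ => neg_norm_le_of_mem_inner_unit⟩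

lemma neg_norm_le_sInf_inner_unit (C : Set F) (u : F) :
    -‖u‖ ≤ sInf {b : ℝ | ∃ v ∈ C, ‖v‖ = 1 ∧ b = ⟪u, v⟫} :=
  Real.le_sInf (fun _ => neg_norm_le_of_mem_inner_unit) (neg_nonpos.2 (norm_nonneg u))

lemma mul_norm_le_inner_of_mem_cone {C : Set F}
    (hC : ∀ (t : ℝ) (x : F), 0 ≤ t → x ∈ C → t • x ∈ C) {u : F} {a : ℝ}
    (ha : ∀ v ∈ C, ‖v‖ = 1 → a ≤ ⟪u, v⟫) {c : F} (hc : c ∈ C) : a * ‖c‖ ≤ ⟪u, c⟫ := by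
  rcases eq_or_ne c 0 with rfl | hc0
  · simp
  have hpos : 0 < ‖c‖ := norm_pos_iff.2 hc0
  have hunit : ‖‖c‖⁻¹ • c‖ = 1 := by
    rw [norm_smul, norm_inv, norm_norm, inv_mul_cancel₀ hpos.ne']
  have := ha _ (hC _ _ (inv_nonneg.2 hpos.le) hc) hunit
  rw [real_inner_smul_right, le_inv_mul_iff₀ hpos] at this
  linarith

lemma sub_le_inner_of_mul_norm_le_inner {u x c : F} (hu : ‖u‖ = 1) {a : ℝ} (ha : 0 ≤ a)
    (hc : a * ‖c‖ ≤ ⟪u, c⟫) : a * (‖x‖ - dist x c) - dist x c ≤ ⟪u, x⟫ := by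
  have hxc : -dist x c ≤ ⟪u, x - c⟫ := by
    simpa [hu, dist_eq_norm] using neg_le_of_abs_le (abs_real_inner_le_norm u (x - c))
  have hnorm : ‖x‖ - dist x c ≤ ‖c‖ := by
    linarith [norm_sub_norm_le x c, dist_eq_norm x c]
  have hsplit : ⟪u, x⟫ = ⟪u, c⟫ + ⟪u, x - c⟫ := by
    rw [← inner_add_right, add_sub_cancel]
  nlinarith

lemma le_norm_of_mem_convexHull_of_le_inner {E : Set F} {u : F} (hu : ‖u‖ = 1) {b : ℝ}
    (hE : ∀ x ∈ E, b ≤ ⟪u, x⟫) : ∀ y ∈ convexHull ℝ E, b ≤ ‖y‖ := by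
  intro y hy
  have hconv : Convex ℝ {z : F | b ≤ ⟪u, z⟫} := convex_halfSpace_ge (innerₛₗ ℝ u).isLinear b
  calc b ≤ ⟪u, y⟫ := convexHull_min hE hconv hy
    _ ≤ ‖u‖ * ‖y‖ := real_inner_le_norm u y
    _ = ‖y‖ := by rw [hu, one_mul]

theorem le_norm_of_mem_convexHull_of_infDist_le [ProperSpace F] {C : Set F} (hCc : IsClosed C)
    (hCne : C.Nonempty) (hC : ∀ (t : ℝ) (x : F), 0 ≤ t → x ∈ C → t • x ∈ C) {u : F}
    (hu : ‖u‖ = 1) {a : ℝ} (ha0 : 0 ≤ a) (ha : ∀ v ∈ C, ‖v‖ = 1 → a ≤ ⟪u, v⟫)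
    {E : Set F} {m D : ℝ} (hm : ∀ x ∈ E, m ≤ ‖x‖) (hD : ∀ x ∈ E, infDist x C ≤ D) :
    ∀ y ∈ convexHull ℝ E, a * (m - D) - D ≤ ‖y‖ := by
  refine le_norm_of_mem_convexHull_of_le_inner hu fun x hx => ?_
  obtain ⟨c, hc, hxc⟩ := hCc.exists_infDist_eq_dist hCne x
  have hdist : dist x c ≤ D := hxc ▸ hD x hx
  have := sub_le_inner_of_mul_norm_le_inner (x := x) hu ha0
    (mul_norm_le_inner_of_mem_cone hC ha hc)
  nlinarith [hm x hx]

end InnerProductSpace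

/-- Lemma (cone lemma): for `R` a polytope and `C` a closed convex cone,
`min_{x∈R} ‖x‖ + (1+γ_C) max_{x∈ext(R)} ‖x − Π_C(x)‖ ≥ γ_C min_{x∈ext(R)} ‖x‖`,
where `γ_C = max_{‖u‖=1} min_{v∈C,‖v‖=1} ⟨u,v⟩` and `‖x − Π_C(x)‖ = dist(x, C)`. -/
theorem cone_lemma {d : ℕ} (S : Finset (EuclideanSpace ℝ (Fin d))) (hS : S.Nonempty)
    (R : Set (EuclideanSpace ℝ (Fin d))) (hR : R = convexHull ℝ (S : Set (EuclideanSpace ℝ (Fin d))))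
    (C : Set (EuclideanSpace ℝ (Fin d))) (hCc : IsClosed C) (hCne : C.Nonempty)
    (hCcone : Convex ℝ C ∧ ∀ (t : ℝ) (x : EuclideanSpace ℝ (Fin d)), 0 ≤ t → x ∈ C → t • x ∈ C)
    (γ : ℝ)
    (hγ : γ = sSup {a : ℝ | ∃ u : EuclideanSpace ℝ (Fin d), ‖u‖ = 1 ∧
      a = sInf {b : ℝ | ∃ v ∈ C, ‖v‖ = 1 ∧ b = inner ℝ u v}}) :
    γ * sInf {a : ℝ | ∃ x ∈ Set.extremePoints ℝ R, a = ‖x‖} ≤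
      sInf {a : ℝ | ∃ x ∈ R, a = ‖x‖} +
        (1 + γ) * sSup {a : ℝ | ∃ x ∈ Set.extremePoints ℝ R, a = Metric.infDist x C} := by
  subst hR
  set E := (convexHull ℝ (S : Set (EuclideanSpace ℝ (Fin d)))).extremePoints ℝ
  set m := sInf {a : ℝ | ∃ x ∈ E, a = ‖x‖}
  set D := sSup {a : ℝ | ∃ x ∈ E, a = infDist x C}
  set n := sInf {a : ℝ | ∃ x ∈ convexHull ℝ (S : Set (EuclideanSpace ℝ (Fin d))), a = ‖x‖}
  have hEfin : E.Finite := S.finite_toSet.subset extremePoints_convexHull_subset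
  have hm : ∀ x ∈ E, m ≤ ‖x‖ := fun x hx =>
    csInf_le ⟨0, by rintro _ ⟨y, -, rfl⟩; exact norm_nonneg y⟩ ⟨x, hx, rfl⟩
  have hD : ∀ x ∈ E, infDist x C ≤ D := fun x hx =>
    le_csSup ((hEfin.image fun x => infDist x C).subset
      (by rintro _ ⟨y, hy, rfl⟩; exact ⟨y, hy, rfl⟩)).bddAbove ⟨x, hx, rfl⟩
  have hm0 : 0 ≤ m := Real.sInf_nonneg (by rintro _ ⟨y, -, rfl⟩; exact norm_nonneg y)
  have hn0 : 0 ≤ n := Real.sInf_nonneg (by rintro _ ⟨y, -, rfl⟩; exact norm_nonneg y)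
  have hD0 : 0 ≤ D := Real.sSup_nonneg (by rintro _ ⟨y, -, rfl⟩; exact infDist_nonneg)
  obtain ⟨y₀, hy₀⟩ := (Finset.coe_nonempty.2 hS).convexHull (𝕜 := ℝ)
  rw [hγ]
  refine Real.sSup_mul_le_add ?_ hm0 hn0 hD0 ?_
  · rintro _ ⟨u, hu, rfl⟩
    simpa [hu] using neg_norm_le_sInf_inner_unit C u
  rintro _ ⟨u, hu, rfl⟩ ha
  have hlow := le_norm_of_mem_convexHull_of_infDist_le hCc hCne hCcone.2 hu ha.le
    (fun v hv hv1 => csInf_le (bddBelow_inner_unit C u) ⟨v, hv, hv1, rfl⟩) hm hD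
  rw [S.finite_toSet.convexHull_extremePoints_convexHull] at hlow
  exact le_csInf ⟨_, y₀, hy₀, rfl⟩ (by rintro _ ⟨y, hy, rfl⟩; exact hlow y hy)
end

section
/- Let X = X₀ + Z ∈ ℝ^{n×d} with maxᵢ ‖Zᵢ‖₂ ≤ δ, and let H₀ ∈ ℝ^{r×d}. Then 𝒟(H₀, X)^{1/2} ≤ 𝒟(H₀, X₀)^{1/2} + δ√r, where 𝒟(A,B) = Σᵢ min_{α ∈ Δⁿ} ‖Aᵢ − Bᵀα‖₂² sums over the r rows of A the squared distances to conv(B). -/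
/-!
Moving every vertex of a finite point set by at most `δ` moves every point of its convex hull by
at most `δ`, so each of the `r` distances to the hull grows by at most `δ`; Minkowski's inequality
in `ℝʳ` turns this into the bound `δ √r` on the square roots of the sums of squares.
-/

open Metric Set

noncomputable section

def row {n d : ℕ} (M : Matrix (Fin n) (Fin d) ℝ) (i : Fin n) : EuclideanSpace ℝ (Fin d) :=
  WithLp.toLp 2 (fun j => M i j)

def convRows {n d : ℕ} (M : Matrix (Fin n) (Fin d) ℝ) : Set (EuclideanSpace ℝ (Fin d)) :=
  convexHull ℝ (Set.range (row M))

def cvxDiv {r n d : ℕ} (A : Matrix (Fin r) (Fin d) ℝ) (B : Matrix (Fin n) (Fin d) ℝ) : ℝ :=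
  ∑ i, (Metric.infDist (row A i) (convRows B)) ^ 2

section ConvexHull

variable {ι E : Type*} [SeminormedAddCommGroup E] [NormedSpace ℝ E] {x y : ι → E} {δ : ℝ}

theorem exists_dist_le_of_mem_convexHull_range (h : ∀ i, dist (x i) (y i) ≤ δ) {p : E}
    (hp : p ∈ convexHull ℝ (range x)) :
    ∃ q ∈ convexHull ℝ (range y), dist p q ≤ δ := by
  -- The hull of the pairs `(x i, y i)` lies in the convex set `{(a, b) | ‖a - b‖ ≤ δ}`;
  -- project it onto both factors.
  let f : E × E →ₗ[ℝ] E := LinearMap.fst ℝ E E - LinearMap.snd ℝ E E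
  have hpairs : range (fun i => (x i, y i)) ⊆ f ⁻¹' closedBall 0 δ :=
    range_subset_iff.2 fun i => by simpa [f, dist_eq_norm] using h i
  have hfst : range x = LinearMap.fst ℝ E E '' range fun i => (x i, y i) := by
    rw [← range_comp]; rfl
  have hsnd : range y = LinearMap.snd ℝ E E '' range fun i => (x i, y i) := by
    rw [← range_comp]; rfl
  rw [hfst, ← LinearMap.image_convexHull] at hp
  obtain ⟨z, hz, rfl⟩ := hp
  have hz' := convexHull_min hpairs ((convex_closedBall 0 δ).linear_preimage f) hz
  refine ⟨z.2, ?_, by simpa [f, dist_eq_norm] using hz'⟩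
  rw [hsnd, ← LinearMap.image_convexHull]
  exact mem_image_of_mem _ hz

theorem infDist_convexHull_range_le (hδ : 0 ≤ δ) (h : ∀ i, dist (x i) (y i) ≤ δ) (p : E) :
    infDist p (convexHull ℝ (range y)) ≤ infDist p (convexHull ℝ (range x)) + δ := by
  have hH : hausdorffEDist (convexHull ℝ (range x)) (convexHull ℝ (range y)) ≤
      ENNReal.ofReal δ := by
    refine hausdorffEDist_le_of_mem_edist (fun a ha => ?_) fun b hb => ?_
    · obtain ⟨q, hq, hd⟩ := exists_dist_le_of_mem_convexHull_range h ha
      exact ⟨q, hq, edist_le_ofReal hδ |>.2 hd⟩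
    · obtain ⟨q, hq, hd⟩ :=
        exists_dist_le_of_mem_convexHull_range (fun i => (dist_comm _ _).trans_le (h i)) hb
      exact ⟨q, hq, edist_le_ofReal hδ |>.2 hd⟩
  calc infDist p (convexHull ℝ (range y))
      ≤ infDist p (convexHull ℝ (range x)) +
          hausdorffDist (convexHull ℝ (range x)) (convexHull ℝ (range y)) :=
        infDist_le_infDist_add_hausdorffDist (ne_top_of_le_ne_top ENNReal.ofReal_ne_top hH)
    _ ≤ infDist p (convexHull ℝ (range x)) + δ := by
        gcongr; exact ENNReal.toReal_le_of_le_ofReal hδ hH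

end ConvexHull

theorem Real.sqrt_sum_add_sq_le {ι : Type*} [Fintype ι] (f g : ι → ℝ) :
    √(∑ i, (f i + g i) ^ 2) ≤ √(∑ i, f i ^ 2) + √(∑ i, g i ^ 2) := by
  have hnorm (h : ι → ℝ) :
      √(∑ i, h i ^ 2) = ‖(WithLp.toLp 2 h : EuclideanSpace ℝ ι)‖ := by
    rw [← EuclideanSpace.real_norm_sq_eq, Real.sqrt_sq (norm_nonneg _)]
  rw [hnorm f, hnorm g]
  exact (hnorm (f + g)).trans_le (norm_add_le (WithLp.toLp 2 f) (WithLp.toLp 2 g))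

theorem row_add {n d : ℕ} (A B : Matrix (Fin n) (Fin d) ℝ) (i : Fin n) :
    row (A + B) i = row A i + row B i :=
  rfl

/-- If `X = X₀ + Z` with row norms of `Z` at most `δ`, then
`𝒟(H₀,X)^{1/2} ≤ 𝒟(H₀,X₀)^{1/2} + δ √r`. -/
theorem sqrt_cvxDiv_perturb {n r d : ℕ} (δ : ℝ) (hδ : 0 ≤ δ)
    (X₀ X Z : Matrix (Fin n) (Fin d) ℝ) (H₀ : Matrix (Fin r) (Fin d) ℝ)
    (hX : X = X₀ + Z) (hZ : ∀ i, ‖row Z i‖ ≤ δ) :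
    Real.sqrt (cvxDiv H₀ X) ≤ Real.sqrt (cvxDiv H₀ X₀) + δ * Real.sqrt r := by
  subst hX
  have hrow i : dist (row X₀ i) (row (X₀ + Z) i) ≤ δ := by
    rw [row_add, dist_self_add_right]; exact hZ i
  have hdist i :
      infDist (row H₀ i) (convRows (X₀ + Z)) ≤ infDist (row H₀ i) (convRows X₀) + δ :=
    infDist_convexHull_range_le hδ hrow _
  calc √(cvxDiv H₀ (X₀ + Z))
      ≤ √(∑ i, (infDist (row H₀ i) (convRows X₀) + δ) ^ 2) :=
        Real.sqrt_le_sqrt <| Finset.sum_le_sum fun i _ => by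
          gcongr
          exacts [infDist_nonneg, hdist i]
    _ ≤ √(cvxDiv H₀ X₀) + √(∑ _ : Fin r, δ ^ 2) := Real.sqrt_sum_add_sq_le _ _
    _ = √(cvxDiv H₀ X₀) + δ * √r := by
        rw [Finset.sum_const, Finset.card_univ, Fintype.card_fin, nsmul_eq_mul,
          Real.sqrt_mul' _ (sq_nonneg δ), Real.sqrt_sq hδ, mul_comm]
end
end
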